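/- Fix a moment–quantile uncertainty set 𝓕 on a finite value set G (nonempty), λ_new, λ_old ∈ [0,1], and r_old ∈ ℝ such that the set M_old = { Φ : R_{λ_old}^Φ(𝓕) ≤ r_old } of mechanisms is nonempty. Then the cross regret min_{Φ ∈ M_old} R_{λ_new}^Φ(𝓕) equals the infimum of θ over all tuples (φ, θ, α_new, β_new, α_old, β_old), where φ : G → ℝ satisfies φ(s) ≥ 0 and Σ_{s∈G} φ(s) = 1 and α_new, α_old : I × G → ℝ, β_new, β_old : J × G → ℝ, subject to: (a) θ ≥ Σ_{i∈I} α_{new,i}(p)·m_i + Σ_{j∈J} β_{new,j}(p)·q_j for all p ∈ G; (b) λ_new·p·1{v ≥ p} − Σ_{s∈G, s ≤ v} s·φ(s) − Σ_{i∈I} α_{new,i}(p)·v^i − Σ_{j∈J} β_{new,j}(p)·1{v ≥ r_j} ≤ 0 for all v, p ∈ G; (c) r_old ≥ Σ_{i∈I} α_{old,i}(p)·m_i + Σ_{j∈J} β_{old,j}(p)·q_j for all p ∈ G; (d) λ_old·p·1{v ≥ p} − Σ_{s∈G, s ≤ v} s·φ(s) − Σ_{i∈I} α_{old,i}(p)·v^i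 − Σ_{j∈J} β_{old,j}(p)·1{v ≥ r_j} ≤ 0 for all v, p ∈ G. The infimum is attained. -/

import Mathlib

noncomputable section

namespace RobustPricing

/-- A probability weight vector on the grid `{v 0, …, v K}`. -/
def IsDist {K : ℕ} (f : Fin (K + 1) → ℝ) : Prop :=
  (∀ i, 0 ≤ f i) ∧ ∑ i, f i = 1

/-- Tail probability `F̄(p) = ∑_{v ∈ G, v ≥ p} f(v)`. -/
def tail {K : ℕ} (v f : Fin (K + 1) → ℝ) (p : ℝ) : ℝ :=
  ∑ i, if p ≤ v i then f i else 0

/-- Expected revenue of the price distribution `φ` against the value distribution `f`. -/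
def revenue {K : ℕ} (v φ f : Fin (K + 1) → ℝ) : ℝ :=
  ∑ i, φ i * v i * tail v f (v i)

/-- `OPT(F) = max_{p ∈ G} p · F̄(p)`. -/
def opt {K : ℕ} (v f : Fin (K + 1) → ℝ) : ℝ :=
  ⨆ i, v i * tail v f (v i)

/-- `Regret(Φ, F) = OPT(F) − Revenue(Φ, F)`. -/
def regret {K : ℕ} (v φ f : Fin (K + 1) → ℝ) : ℝ :=
  opt v f - revenue v φ f

/-- `Ratio(Φ, F) = Revenue(Φ, F) / OPT(F)`. -/
def ratio {K : ℕ} (v φ f : Fin (K + 1) → ℝ) : ℝ :=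
  revenue v φ f / opt v f

/-- The set of mechanisms (price distributions on the grid). -/
def Mech (K : ℕ) : Set (Fin (K + 1) → ℝ) := {φ | IsDist φ}

/-- Worst-case `λ`-regret `R_λ^Φ(𝓕)` of mechanism `φ` over the uncertainty set `F`. -/
def wcReg {K : ℕ} (v : Fin (K + 1) → ℝ) (F : Set (Fin (K + 1) → ℝ))
    (φ : Fin (K + 1) → ℝ) (l : ℝ) : ℝ :=
  sSup ((fun f => l * opt v f - revenue v φ f) '' F)

/-- Minimax `λ`-regret `R_λ*(𝓕)`. -/
def minimaxReg {K : ℕ} (v : Fin (K + 1) → ℝ) (F : Set (Fin (K + 1) → ℝ)) (l : ℝ) : ℝ :=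
  sInf ((fun φ => wcReg v F φ l) '' Mech K)

/-- Worst-case revenue `min_{F ∈ 𝓕} Revenue(Φ, F)`. -/
def worstRevenue {K : ℕ} (v : Fin (K + 1) → ℝ) (F : Set (Fin (K + 1) → ℝ))
    (φ : Fin (K + 1) → ℝ) : ℝ :=
  sInf ((fun f => revenue v φ f) '' F)

/-- Worst-case regret `max_{F ∈ 𝓕} Regret(Φ, F)`. -/
def worstRegret {K : ℕ} (v : Fin (K + 1) → ℝ) (F : Set (Fin (K + 1) → ℝ))
    (φ : Fin (K + 1) → ℝ) : ℝ :=
  sSup ((fun f => regret v φ f) '' F)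

/-- Worst-case ratio `min_{F ∈ 𝓕} Ratio(Φ, F)`. -/
def worstRatio {K : ℕ} (v : Fin (K + 1) → ℝ) (F : Set (Fin (K + 1) → ℝ))
    (φ : Fin (K + 1) → ℝ) : ℝ :=
  sInf ((fun f => ratio v φ f) '' F)

/-- Maximin revenue `θ*_Revenue(𝓕) = max_Φ min_{F ∈ 𝓕} Revenue(Φ, F)`. -/
def thetaRevStar {K : ℕ} (v : Fin (K + 1) → ℝ) (F : Set (Fin (K + 1) → ℝ)) : ℝ :=
  sSup ((fun φ => worstRevenue v F φ) '' Mech K)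

/-- Minimax regret `θ*_Regret(𝓕) = min_Φ max_{F ∈ 𝓕} Regret(Φ, F)`. -/
def thetaRegStar {K : ℕ} (v : Fin (K + 1) → ℝ) (F : Set (Fin (K + 1) → ℝ)) : ℝ :=
  sInf ((fun φ => worstRegret v F φ) '' Mech K)

/-- Maximin ratio `θ*_Ratio(𝓕) = max_Φ min_{F ∈ 𝓕} Ratio(Φ, F)`. -/
def thetaRatStar {K : ℕ} (v : Fin (K + 1) → ℝ) (F : Set (Fin (K + 1) → ℝ)) : ℝ :=
  sSup ((fun φ => worstRatio v F φ) '' Mech K)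

/-- Relative performance of `Φ` over all three criteria:
`RelPerf(Φ, All, 𝓕) = min_{F ∈ 𝓕} min{Rev/θ*_Rev, θ*_Reg/Reg, Ratio/θ*_Ratio}`. -/
def relPerfAll {K : ℕ} (v : Fin (K + 1) → ℝ) (F : Set (Fin (K + 1) → ℝ))
    (φ : Fin (K + 1) → ℝ) : ℝ :=
  sInf ((fun f => min (revenue v φ f / thetaRevStar v F)
    (min (thetaRegStar v F / regret v φ f) (ratio v φ f / thetaRatStar v F))) '' F)

/-- Multi-criterion robust approximation factor `c*(𝓕) = max_Φ RelPerf(Φ, All, 𝓕)`. -/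
def cstar {K : ℕ} (v : Fin (K + 1) → ℝ) (F : Set (Fin (K + 1) → ℝ)) : ℝ :=
  sSup ((fun φ => relPerfAll v F φ) '' Mech K)

/-- The moment–quantile uncertainty set: distributions on the grid whose `i`-th moments
are `m i` for `i ∈ I` and whose tail probability at `r j` is `q j` for `j ∈ J`. -/
def MQSet {K : ℕ} (v : Fin (K + 1) → ℝ) (I : Finset ℕ) (m : ℕ → ℝ)
    (J : Finset ℕ) (r q : ℕ → ℝ) : Set (Fin (K + 1) → ℝ) :=
  {f | IsDist f ∧ (∀ i ∈ I, ∑ k, f k * v k ^ i = m i) ∧ (∀ j ∈ J, tail v f (r j) = q j)}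

/-- Cumulative term `∑_{s ∈ G, s ≤ v_w} s · φ(s)`. -/
def cum {K : ℕ} (v φ : Fin (K + 1) → ℝ) (w : Fin (K + 1)) : ℝ :=
  ∑ s, if v s ≤ v w then v s * φ s else 0

/-- Feasibility of dual variables `(θ, α, β)` in the dual LP for the worst-case λ-regret:
(a) `θ ≥ ∑_i α_i(p) m_i + ∑_j β_j(p) q_j` for all prices `p ∈ G`, and
(b) `λ p 1{v ≥ p} − ∑_{s ≤ v} s φ(s) − ∑_i α_i(p) v^i − ∑_j β_j(p) 1{v ≥ r_j} ≤ 0`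
for all values `v` and prices `p` in `G`. -/
def dualFeas {K : ℕ} (v : Fin (K + 1) → ℝ) (I : Finset ℕ) (m : ℕ → ℝ)
    (J : Finset ℕ) (r q : ℕ → ℝ) (φ : Fin (K + 1) → ℝ) (l θ : ℝ)
    (α β : ℕ → Fin (K + 1) → ℝ) : Prop :=
  (∀ p, ∑ i ∈ I, α i p * m i + ∑ j ∈ J, β j p * q j ≤ θ) ∧
  (∀ w p, l * v p * (if v p ≤ v w then 1 else 0) - cum v φ w
      - (∑ i ∈ I, α i p * v w ^ i)
      - (∑ j ∈ J, β j p * (if r j ≤ v w then 1 else 0)) ≤ 0)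


section Aux
open Finset

variable {ι : Type*} [Fintype ι] {E : Type*} [AddCommGroup E] [Module ℝ E]

theorem subtype_sum_eq (g : ι → E) (f : ι → ℝ) (h0 : ι → ℝ)
    (hext : ∀ j, f j = 0 → h0 j = 0) :
    ∑ j, h0 j • g j = ∑ j : {j // f j ≠ 0}, h0 j • g (j : ι) := by
  classical
  rw [← Finset.sum_filter_of_ne (p := fun j => f j ≠ 0) (s := Finset.univ)
      (f := fun j => h0 j • g j) (by
        intro x _ hx hfx
        exact absurd (by rw [hext x hfx, zero_smul] : h0 x • g x = 0) hx),
    ← Finset.sum_coe_sort (Finset.univ.filter (fun j => f j ≠ 0))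
      (fun j => h0 j • g j)]
  exact Fintype.sum_equiv (Equiv.subtypeEquivRight (by simp)).symm _ _ (fun j => rfl)

theorem carath_aux (g : ι → E) (N : ℕ) : ∀ f : ι → ℝ, (∀ j, 0 ≤ f j) →
    (Finset.univ.filter (fun j => f j ≠ 0)).card ≤ N →
    ∃ f' : ι → ℝ, (∀ j, 0 ≤ f' j) ∧ ∑ j, f' j • g j = ∑ j, f j • g j ∧
      LinearIndependent ℝ (fun j : {j // f' j ≠ 0} => g j) := by
  classical
  induction N with
  | zero =>
    intro f hf hcard
    refine ⟨f, hf, rfl, ?_⟩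
    have hz : ∀ j, f j = 0 := by
      intro j
      by_contra hj
      have hmem : j ∈ Finset.univ.filter (fun j => f j ≠ 0) := by simp [hj]
      have := Finset.card_pos.mpr ⟨j, hmem⟩
      omega
    have : IsEmpty {j // f j ≠ 0} := ⟨fun j => j.2 (hz j)⟩
    exact linearIndependent_empty_type
  | succ N ih =>
    intro f hf hcard
    by_cases hli : LinearIndependent ℝ (fun j : {j // f j ≠ 0} => g j)
    · exact ⟨f, hf, rfl, hli⟩
    · obtain ⟨c, hc0, jc, hjc⟩ := Fintype.not_linearIndependent_iff.mp hli
      set h0 : ι → ℝ := fun j => if hj : f j ≠ 0 then c ⟨j, hj⟩ else 0 with hh0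
      have hext : ∀ j, f j = 0 → h0 j = 0 := fun j hj => by simp [hh0, hj]
      have hsum0 : ∑ j, h0 j • g j = 0 := by
        rw [subtype_sum_eq g f h0 hext, ← hc0]
        exact Fintype.sum_congr _ _ (fun j => by simp [hh0, j.2])
      -- wlog some coordinate is positive
      have key : ∀ h : ι → ℝ, (∑ j, h j • g j = 0) → (∀ j, f j = 0 → h j = 0) →
          (∃ j, 0 < h j) →
          ∃ f' : ι → ℝ, (∀ j, 0 ≤ f' j) ∧ ∑ j, f' j • g j = ∑ j, f j • g j ∧
            LinearIndependent ℝ (fun j : {j // f' j ≠ 0} => g j) := by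
        intro h hsum hsupp ⟨j0, hj0⟩
        set s := Finset.univ.filter (fun j => 0 < h j) with hs
        obtain ⟨jm, hjm, hmin⟩ := Finset.exists_min_image s (fun j => f j / h j)
          ⟨j0, by simp [hs, hj0]⟩
        have hjm_pos : 0 < h jm := by
          simpa [hs] using hjm
        set t := f jm / h jm with ht
        have ht0 : 0 ≤ t := div_nonneg (hf jm) hjm_pos.le
        set fn : ι → ℝ := fun j => f j - t * h j with hfn
        have hfn0 : ∀ j, 0 ≤ fn j := by
          intro j
          by_cases hj : 0 < h j
          · have := hmin j (by simp [hs, hj])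
            have : t * h j ≤ f j := by
              rw [← le_div_iff₀ hj]; exact this
            simp [hfn]; linarith
          · push_neg at hj
            have : 0 ≤ -(t * h j) := by
              have : t * h j ≤ 0 := mul_nonpos_of_nonneg_of_nonpos ht0 hj
              linarith
            have := hf j
            simp [hfn]; nlinarith
        have hfnsum : ∑ j, fn j • g j = ∑ j, f j • g j := by
          simp only [hfn, sub_smul, Finset.sum_sub_distrib]
          have : ∑ j, (t * h j) • g j = t • ∑ j, h j • g j := by
            rw [Finset.smul_sum]
            exact Finset.sum_congr rfl (fun j _ => (smul_smul t (h j) (g j)).symm)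
          rw [this, hsum, smul_zero, sub_zero]
        have hssub : Finset.univ.filter (fun j => fn j ≠ 0) ⊂
            Finset.univ.filter (fun j => f j ≠ 0) := by
          constructor
          · intro j hj
            simp only [Finset.mem_filter, Finset.mem_univ, true_and] at hj ⊢
            intro hfj
            exact hj (by simp [hfn, hfj, hsupp j hfj])
          · intro hsub
            have hjm_mem : jm ∈ Finset.univ.filter (fun j => f j ≠ 0) := by
              simp only [Finset.mem_filter, Finset.mem_univ, true_and]
              intro hfjm
              exact absurd (hsupp jm hfjm) hjm_pos.ne'
            have : fn jm ≠ 0 := by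
              simpa only [Finset.mem_filter, Finset.mem_univ, true_and] using hsub hjm_mem
            apply this
            simp only [hfn, ht]
            field_simp
            ring
          
        have := Finset.card_lt_card hssub
        exact ih fn hfn0 (by omega) |>.imp (fun f' ⟨h1, h2, h3⟩ => ⟨h1, h2.trans hfnsum, h3⟩)
      by_cases hpos : ∃ j, 0 < h0 j
      · exact key h0 hsum0 hext hpos
      · refine key (-h0) (by simpa using hsum0) (fun j hj => by simp [hext j hj]) ?_
        push_neg at hpos
        have : h0 jc ≠ 0 := by simp [hh0, jc.2, Subtype.coe_eta]; exact hjc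
        exact ⟨jc, by simp; exact lt_of_le_of_ne (hpos jc) this⟩variable {H : Type*} [NormedAddCommGroup H] [NormedSpace ℝ H] [FiniteDimensional ℝ H]

def coneSet (g : ι → H) : Set H :=
  {x | ∃ f : ι → ℝ, (∀ j, 0 ≤ f j) ∧ ∑ j, f j • g j = x}

theorem coneSet_isClosed (g : ι → H) : IsClosed (coneSet g) := by
  classical
  have hrepr : coneSet g = ⋃ (s : Finset ι) (_ : LinearIndependent ℝ (fun j : s => g j)),
      (fun f : s → ℝ => ∑ j : s, f j • g (j : ι)) '' {f | ∀ j, 0 ≤ f j} := by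
    ext x
    constructor
    · rintro ⟨f, hf, rfl⟩
      obtain ⟨f', hf'0, hf'sum, hf'li⟩ := carath_aux g (Finset.univ.filter (fun j => f j ≠ 0)).card
        f hf le_rfl
      set s := Finset.univ.filter (fun j => f' j ≠ 0) with hs
      have he : ∀ j : s, f' (j : ι) ≠ 0 := fun j => by
        exact (Finset.mem_filter.mp j.2).2
      have hli : LinearIndependent ℝ (fun j : s => g j) :=
        hf'li.comp (fun j : s => (⟨(j : ι), he j⟩ : {j // f' j ≠ 0}))
          (by intro a b hab; ext; exact congrArg (fun z : {j // f' j ≠ 0} => (z : ι)) hab)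
      refine Set.mem_iUnion.mpr ⟨s, Set.mem_iUnion.mpr ⟨hli, ?_⟩⟩
      refine ⟨fun j => f' j, fun j => hf'0 j, ?_⟩
      show ∑ j : s, f' (j : ι) • g (j : ι) = _
      rw [Finset.sum_coe_sort s (fun j => f' j • g j), hs,
        Finset.sum_filter_of_ne (by intro j _ hj hfj; exact hj (by rw [hfj, zero_smul]))]
      exact hf'sum
    · intro hx
      obtain ⟨s, hs'⟩ := Set.mem_iUnion.mp hx
      obtain ⟨-, f, hf, rfl⟩ := Set.mem_iUnion.mp hs'
      refine ⟨fun j => if hj : j ∈ s then f ⟨j, hj⟩ else 0, ?_, ?_⟩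
      · intro j
        by_cases hj : j ∈ s
        · exact le_of_le_of_eq (hf ⟨j, hj⟩) (by simp [hj])
        · simp [hj]
      · show (∑ j : ι, (if hj : j ∈ s then f ⟨j, hj⟩ else 0) • g j) = _
        calc ∑ j : ι, (if hj : j ∈ s then f ⟨j, hj⟩ else 0) • g j
            = ∑ j ∈ s, (if hj : j ∈ s then f ⟨j, hj⟩ else 0) • g j :=
              (Finset.sum_subset (Finset.subset_univ s) (by intro j _ hj; simp [hj])).symm
          _ = ∑ j : s, (if hj : (j : ι) ∈ s then f ⟨j, hj⟩ else 0) • g (j : ι) :=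
              (Finset.sum_coe_sort s (fun j => (if hj : j ∈ s then f ⟨j, hj⟩ else (0:ℝ)) • g j)).symm
          _ = ∑ j : s, f j • g (j : ι) := Fintype.sum_congr _ _ (fun j => by rw [dif_pos j.2])
  rw [hrepr]
  refine isClosed_iUnion_of_finite (fun s => isClosed_iUnion_of_finite (fun hli => ?_))
  -- image of a closed set under an injective linear map
  let T : (s → ℝ) →ₗ[ℝ] H :=
    { toFun := fun f => ∑ j : s, f j • g (j : ι)
      map_add' := by
        intro a b
        simp [add_smul, Finset.sum_add_distrib]
      map_smul' := by
        intro c a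
        simp [Finset.smul_sum, smul_smul] }
  have hTinj : LinearMap.ker T = ⊥ := by
    rw [LinearMap.ker_eq_bot']
    intro f hTf
    funext j
    exact Fintype.linearIndependent_iff.mp hli f hTf j
  have hT : Topology.IsClosedEmbedding T := LinearMap.isClosedEmbedding_of_injective hTinj
  have hcl : IsClosed {f : s → ℝ | ∀ j, 0 ≤ f j} := by
    have hpi : {f : s → ℝ | ∀ j, 0 ≤ f j} = ⋂ j, {f | 0 ≤ f j} := by
      ext f; simp [Set.mem_iInter]
    rw [hpi]
    exact isClosed_iInter (fun j => isClosed_le continuous_const (continuous_apply j))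
  exact hT.isClosedMap _ hcl

open scoped InnerProductSpace

theorem coneSet_separation {H : Type*} [NormedAddCommGroup H] [InnerProductSpace ℝ H]
    [FiniteDimensional ℝ H] {ι : Type*} [Fintype ι] (g : ι → H) {b : H}
    (hb : b ∉ coneSet g) :
    ∃ y : H, (∀ x ∈ coneSet g, 0 ≤ ⟪x, y⟫_ℝ) ∧ ⟪y, b⟫_ℝ < 0 := by
  classical
  let Kc : ConvexCone ℝ H :=
    { carrier := coneSet g ∪ {0}
      smul_mem' := by
        rintro c hc x (⟨f, hf, rfl⟩ | hx)
        · exact Or.inl ⟨fun j => c * f j, fun j => mul_nonneg hc.le (hf j),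
            by rw [Finset.smul_sum]; exact Finset.sum_congr rfl (fun j _ => (smul_smul c (f j) (g j)).symm)⟩
        · simp only [Set.mem_singleton_iff] at hx
          subst hx
          exact Or.inr (by simp)
      add_mem' := by
        rintro x (⟨f1, hf1, rfl⟩ | hx) y (⟨f2, hf2, rfl⟩ | hy)
        · exact Or.inl ⟨fun j => f1 j + f2 j, fun j => add_nonneg (hf1 j) (hf2 j),
            by simp [add_smul, Finset.sum_add_distrib]⟩
        · simp only [Set.mem_singleton_iff] at hy; subst hy
          exact Or.inl (by rw [add_zero]; exact ⟨f1, hf1, rfl⟩)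
        · simp only [Set.mem_singleton_iff] at hx; subst hx
          exact Or.inl (by rw [zero_add]; exact ⟨f2, hf2, rfl⟩)
        · simp only [Set.mem_singleton_iff] at hx hy; subst hx; subst hy
          exact Or.inr (by simp) }
  have hK : (Kc : Set H) = coneSet g ∪ {0} := rfl
  have hzero : (0 : H) ∈ coneSet g := ⟨fun _ => 0, fun _ => le_rfl, by simp⟩
  have hKeq : (Kc : Set H) = coneSet g := by
    rw [hK]
    exact Set.union_eq_self_of_subset_right (by simpa using hzero)
  have hclosed : IsClosed (Kc : Set H) := by rw [hKeq]; exact coneSet_isClosed g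
  have hne : (Kc : Set H).Nonempty := ⟨0, by rw [hKeq]; exact hzero⟩
  have hbK : b ∉ Kc := by
    intro hbm
    exact hb (by rwa [← SetLike.mem_coe, hKeq] at hbm)
  obtain ⟨y, hy1, hy2⟩ :=
    ProperCone.hyperplane_separation' (x₀ := b)
      ({ toSubmodule := Kc.toPointedCone (Or.inr rfl), isClosed' := hclosed } : ProperCone ℝ H) hbK
  exact ⟨y, fun x hx => hy1 x (show x ∈ Kc by rwa [← SetLike.mem_coe, hKeq]),
    by rw [real_inner_comm]; exact hy2⟩

/-- Gale's theorem / Farkas lemma: if the system `M y ≥ d` has no solution, then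
there is `u ≥ 0` with `uᵀM = 0` and `uᵀd > 0`. -/
theorem gale {n ρ : Type*} [Fintype n] [Fintype ρ] [DecidableEq ρ] (M : ρ → n → ℝ) (d : ρ → ℝ)
    (h : ∀ y : n → ℝ, ¬ (∀ i, d i ≤ ∑ k, M i k * y k)) :
    ∃ u : ρ → ℝ, (∀ i, 0 ≤ u i) ∧ (∀ k, ∑ i, u i * M i k = 0) ∧ 0 < ∑ i, u i * d i := by
  classical
  -- generators of the cone `{My - s : y, s ≥ 0}` in `EuclideanSpace ℝ ρ`
  let g : (n ⊕ n ⊕ ρ) → EuclideanSpace ℝ ρ := fun j =>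
    Sum.casesOn j (fun k => WithLp.toLp 2 (fun i => M i k))
      (fun j' => Sum.casesOn j' (fun k => WithLp.toLp 2 (fun i => -M i k))
        (fun i0 => WithLp.toLp 2 (fun i => if i = i0 then (-1:ℝ) else 0)))
  have happ : ∀ (F : (n ⊕ n ⊕ ρ) → EuclideanSpace ℝ ρ) (i : ρ),
      (∑ j, F j) i = ∑ j, F j i := fun F i => by
    rw [WithLp.ofLp_sum, Finset.sum_apply]
  have hginl : ∀ k i, g (Sum.inl k) i = M i k := fun k i => rfl
  have hginrl : ∀ k i, g (Sum.inr (Sum.inl k)) i = -M i k := fun k i => rfl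
  have hginrr : ∀ i0 i, g (Sum.inr (Sum.inr i0)) i = if i = i0 then (-1:ℝ) else 0 :=
    fun i0 i => rfl
  have hd : WithLp.toLp 2 (fun i => d i) ∉ coneSet g := by
    rintro ⟨f, hf, hsum⟩
    apply h (fun k => f (Sum.inl k) - f (Sum.inr (Sum.inl k)))
    intro i
    have hcoord : d i = ∑ j, f j * g j i := by
      have h1 : (∑ j, f j • g j) i = d i := congrArg (fun x : EuclideanSpace ℝ ρ => x i) hsum
      have h2 : (∑ j, f j • g j) i = ∑ j, f j * g j i := by
        rw [happ (fun j => f j • g j) i]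
        exact Finset.sum_congr rfl (fun j _ => rfl)
      rw [← h1, h2]
    rw [Fintype.sum_sum_type, Fintype.sum_sum_type] at hcoord
    simp only [hginl, hginrl, hginrr] at hcoord
    have h3 : ∑ i0, f (Sum.inr (Sum.inr i0)) * (if i = i0 then (-1:ℝ) else 0)
        = -f (Sum.inr (Sum.inr i)) := by
      rw [Finset.sum_eq_single i]
      · simp
      · intro b _ hb; simp [Ne.symm hb]
      · simp
    rw [h3] at hcoord
    have h4 : ∑ k, M i k * (f (Sum.inl k) - f (Sum.inr (Sum.inl k)))
        = ∑ k, f (Sum.inl k) * M i k + ∑ k, f (Sum.inr (Sum.inl k)) * -M i k := by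
      rw [← Finset.sum_add_distrib]
      exact Finset.sum_congr rfl (fun k _ => by ring)
    rw [h4, hcoord]
    have := hf (Sum.inr (Sum.inr i))
    linarith
  obtain ⟨y, hy1, hy2⟩ := coneSet_separation g hd
  have hmem : ∀ j, g j ∈ coneSet g := by
    intro j
    refine ⟨fun j' => if j' = j then 1 else 0, fun j' => by positivity, ?_⟩
    rw [Finset.sum_eq_single j]
    · simp
    · intro b _ hb; simp [hb]
    · simp
  have hinner : ∀ x : EuclideanSpace ℝ ρ, ⟪x, y⟫_ℝ = ∑ i, x i * y i := by
    intro x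
    simp [PiLp.inner_apply, RCLike.inner_apply, mul_comm]
  refine ⟨fun i => -y i, ?_, ?_, ?_⟩
  · intro i
    have := hy1 _ (hmem (Sum.inr (Sum.inr i)))
    rw [hinner] at this
    simp only [hginrr] at this
    have h3 : ∑ i', (if i' = i then (-1:ℝ) else 0) * y i' = -y i := by
      rw [Finset.sum_eq_single i]
      · simp
      · intro b _ hb; simp [hb]
      · simp
    rw [h3] at this
    exact this
  · intro k
    have h1 := hy1 _ (hmem (Sum.inl k))
    have h2 := hy1 _ (hmem (Sum.inr (Sum.inl k)))
    rw [hinner] at h1 h2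
    simp only [hginl, hginrl] at h1 h2
    have he : ∑ i, (fun i => -y i) i * M i k = -∑ i, M i k * y i := by
      rw [← Finset.sum_neg_distrib]
      exact Finset.sum_congr rfl (fun i _ => by ring)
    rw [he]
    have he2 : ∑ i, -M i k * y i = -∑ i, M i k * y i := by
      rw [← Finset.sum_neg_distrib]
      exact Finset.sum_congr rfl (fun i _ => by ring)
    rw [he2] at h2
    linarith
  · have := hy2
    rw [real_inner_comm, hinner] at this
    have he : ∑ i, (fun i => -y i) i * d i = -∑ i, d i * y i := by
      rw [← Finset.sum_neg_distrib]
      exact Finset.sum_congr rfl (fun i _ => by ring)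
    rw [he]
    linarith

end Aux

section LP
variable {K : ℕ} {v : Fin (K + 1) → ℝ} {I : Finset ℕ} {m : ℕ → ℝ}
  {J : Finset ℕ} {r q : ℕ → ℝ}

/-- members of MQSet have coordinates in [0,1] -/
theorem MQSet_le_one {f : Fin (K + 1) → ℝ} (hf : IsDist f) (w : Fin (K + 1)) : f w ≤ 1 := by
  rcases hf with ⟨h0, h1⟩
  rw [← h1]
  exact Finset.single_le_sum (fun i _ => h0 i) (Finset.mem_univ w)

theorem lin_bddAbove (c : Fin (K + 1) → ℝ) :
    BddAbove ((fun f => ∑ w, f w * c w) '' MQSet v I m J r q) := by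
  refine ⟨∑ w, |c w|, ?_⟩
  rintro x ⟨f, hf, rfl⟩
  exact Finset.sum_le_sum (fun w _ => by
    calc f w * c w ≤ f w * |c w| := mul_le_mul_of_nonneg_left (le_abs_self _) (hf.1.1 w)
      _ ≤ 1 * |c w| := mul_le_mul_of_nonneg_right (MQSet_le_one hf.1 w) (abs_nonneg _)
      _ = |c w| := one_mul _)

theorem lin_le_sSup (c : Fin (K + 1) → ℝ) {f : Fin (K + 1) → ℝ} (hf : f ∈ MQSet v I m J r q) :
    ∑ w, f w * c w ≤ sSup ((fun f => ∑ w, f w * c w) '' MQSet v I m J r q) :=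
  le_csSup (lin_bddAbove c) ⟨f, hf, rfl⟩

/-- strong duality for the inner maximization over the moment-quantile set -/
theorem strong_dual (hI0 : 0 ∈ I) (hm0 : m 0 = 1)
    (hMQ : (MQSet v I m J r q).Nonempty) (c : Fin (K + 1) → ℝ) :
    ∃ α β : ℕ → ℝ,
      (∑ i ∈ I, α i * m i + ∑ j ∈ J, β j * q j
        ≤ sSup ((fun f => ∑ w, f w * c w) '' MQSet v I m J r q)) ∧
      ∀ w, c w ≤ (∑ i ∈ I, α i * v w ^ i) + ∑ j ∈ J, β j * (if r j ≤ v w then 1 else 0) := by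
  classical
  set val := sSup ((fun f => ∑ w, f w * c w) '' MQSet v I m J r q) with hval
  set M : (Fin (K + 1) ⊕ Unit) → ({i // i ∈ I} ⊕ {j // j ∈ J}) → ℝ := fun iw k =>
    Sum.casesOn iw
      (fun w => Sum.casesOn k (fun i => v w ^ (i : ℕ)) (fun j => if r j ≤ v w then 1 else 0))
      (fun _ => Sum.casesOn k (fun i => -(m i)) (fun j => -(q j))) with hM
  set d : (Fin (K + 1) ⊕ Unit) → ℝ := fun iw =>
    Sum.casesOn iw (fun w => c w) (fun _ => -val) with hd
  by_cases hy : ∃ y : ({i // i ∈ I} ⊕ {j // j ∈ J}) → ℝ, ∀ iw, d iw ≤ ∑ k, M iw k * y k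
  · obtain ⟨y, hy⟩ := hy
    refine ⟨fun i => if h : i ∈ I then y (Sum.inl ⟨i, h⟩) else 0,
      fun j => if h : j ∈ J then y (Sum.inr ⟨j, h⟩) else 0, ?_, ?_⟩
    · have h2 := hy (Sum.inr ())
      rw [Fintype.sum_sum_type] at h2
      simp only [hM, hd] at h2
      have e1 : ∑ i ∈ I, (if h : i ∈ I then y (Sum.inl ⟨i, h⟩) else 0) * m i
          = ∑ i : {i // i ∈ I}, y (Sum.inl i) * m i := by
        rw [← Finset.sum_coe_sort I (fun i => (if h : i ∈ I then y (Sum.inl ⟨i, h⟩) else 0) * m i)]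
        exact Finset.sum_congr rfl (fun i _ => by rw [dif_pos i.2, Subtype.coe_eta])
      have e2 : ∑ j ∈ J, (if h : j ∈ J then y (Sum.inr ⟨j, h⟩) else 0) * q j
          = ∑ j : {j // j ∈ J}, y (Sum.inr j) * q j := by
        rw [← Finset.sum_coe_sort J (fun j => (if h : j ∈ J then y (Sum.inr ⟨j, h⟩) else 0) * q j)]
        exact Finset.sum_congr rfl (fun j _ => by rw [dif_pos j.2, Subtype.coe_eta])
      rw [e1, e2]
      have e3 : ∑ i : {i // i ∈ I}, -(m i) * y (Sum.inl i) = -∑ i : {i // i ∈ I}, y (Sum.inl i) * m i := by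
        rw [← Finset.sum_neg_distrib]; exact Finset.sum_congr rfl (fun i _ => by ring)
      have e4 : ∑ j : {j // j ∈ J}, -(q j) * y (Sum.inr j) = -∑ j : {j // j ∈ J}, y (Sum.inr j) * q j := by
        rw [← Finset.sum_neg_distrib]; exact Finset.sum_congr rfl (fun j _ => by ring)
      rw [e3, e4] at h2
      linarith
    · intro w
      have h2 := hy (Sum.inl w)
      rw [Fintype.sum_sum_type] at h2
      simp only [hM, hd] at h2
      have e1 : ∑ i ∈ I, (if h : i ∈ I then y (Sum.inl ⟨i, h⟩) else 0) * v w ^ i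
          = ∑ i : {i // i ∈ I}, v w ^ (i : ℕ) * y (Sum.inl i) := by
        rw [← Finset.sum_coe_sort I (fun i => (if h : i ∈ I then y (Sum.inl ⟨i, h⟩) else 0) * v w ^ i)]
        exact Finset.sum_congr rfl (fun i _ => by rw [dif_pos i.2, Subtype.coe_eta]; ring)
      have e2 : ∑ j ∈ J, (if h : j ∈ J then y (Sum.inr ⟨j, h⟩) else 0) * (if r j ≤ v w then (1:ℝ) else 0)
          = ∑ j : {j // j ∈ J}, (if r j ≤ v w then (1:ℝ) else 0) * y (Sum.inr j) := by
        rw [← Finset.sum_coe_sort J (fun j => (if h : j ∈ J then y (Sum.inr ⟨j, h⟩) else 0) * (if r j ≤ v w then (1:ℝ) else 0))]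
        exact Finset.sum_congr rfl (fun j _ => by rw [dif_pos j.2, Subtype.coe_eta]; ring)
      rw [e1, e2]
      exact h2
  · push_neg at hy
    exfalso
    obtain ⟨u, hu0, huM, hud⟩ := gale M d (by
      intro y h'
      obtain ⟨iw, hiw⟩ := hy y
      exact absurd (h' iw) (not_le.mpr hiw))
    have hrow : ∀ k, ∑ w, u (Sum.inl w) * M (Sum.inl w) k
        + u (Sum.inr ()) * M (Sum.inr ()) k = 0 := by
      intro k
      have h5 := huM k
      rw [Fintype.sum_sum_type] at h5
      simpa using h5
    have hobj : u (Sum.inr ()) * val < ∑ w, u (Sum.inl w) * c w := by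
      have h5 := hud
      rw [Fintype.sum_sum_type] at h5
      simpa [hd] using h5
    have hmom : ∀ i ∈ I, ∑ w, u (Sum.inl w) * v w ^ i = u (Sum.inr ()) * m i := by
      intro i hi
      have h5 := hrow (Sum.inl ⟨i, hi⟩)
      simp only [hM] at h5
      linarith
    have hq : ∀ j ∈ J, ∑ w, u (Sum.inl w) * (if r j ≤ v w then (1:ℝ) else 0)
        = u (Sum.inr ()) * q j := by
      intro j hj
      have h5 := hrow (Sum.inr ⟨j, hj⟩)
      simp only [hM] at h5
      linarith
    have ht0 : 0 ≤ u (Sum.inr ()) := hu0 (Sum.inr ())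
    rcases eq_or_lt_of_le ht0 with htz | htpos
    · have h1 := hmom 0 hI0
      simp only [pow_zero, mul_one] at h1
      rw [← htz, zero_mul] at h1
      have hz : ∀ w ∈ Finset.univ, u (Sum.inl w) = 0 :=
        fun w hw => (Finset.sum_eq_zero_iff_of_nonneg (fun w _ => hu0 (Sum.inl w))).mp h1 w hw
      have hzz : ∑ w, u (Sum.inl w) * c w = 0 :=
        Finset.sum_eq_zero (fun w hw => by rw [hz w hw, zero_mul])
      rw [hzz, ← htz, zero_mul] at hobj
      exact lt_irrefl 0 hobj
    · set g : Fin (K + 1) → ℝ := fun w => u (Sum.inl w) / u (Sum.inr ()) with hg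
      have hgMQ : g ∈ MQSet v I m J r q := by
        refine ⟨⟨fun w => div_nonneg (hu0 (Sum.inl w)) ht0, ?_⟩, ?_, ?_⟩
        · have h1 := hmom 0 hI0
          simp only [pow_zero, mul_one] at h1
          rw [hg]
          rw [← Finset.sum_div, h1, hm0, mul_one]
          exact div_self htpos.ne'
        · intro i hi
          have h6 : ∑ w, g w * v w ^ i = (∑ w, u (Sum.inl w) * v w ^ i) / u (Sum.inr ()) := by
            rw [Finset.sum_div]
            exact Finset.sum_congr rfl (fun w _ => by rw [hg]; ring)
          rw [h6, hmom i hi, mul_comm, mul_div_assoc, div_self htpos.ne', mul_one]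
        · intro j hj
          have h6 : tail v g (r j)
              = (∑ w, u (Sum.inl w) * (if r j ≤ v w then (1:ℝ) else 0)) / u (Sum.inr ()) := by
            rw [tail, Finset.sum_div]
            refine Finset.sum_congr rfl (fun w _ => ?_)
            by_cases hc : r j ≤ v w <;> simp [hc, hg]
          rw [h6, hq j hj, mul_comm, mul_div_assoc, div_self htpos.ne', mul_one]
      have hle := lin_le_sSup (v := v) (I := I) (m := m) (J := J) (r := r) (q := q) c hgMQ
      have h7 : ∑ w, g w * c w = (∑ w, u (Sum.inl w) * c w) / u (Sum.inr ()) := by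
        rw [Finset.sum_div]
        exact Finset.sum_congr rfl (fun w _ => by rw [hg]; ring)
      rw [h7, ← hval] at hle
      have h8 : ∑ w, u (Sum.inl w) * c w ≤ u (Sum.inr ()) * val := by
        rwa [div_le_iff₀ htpos, mul_comm] at hle
      linarith

end LP

section Lemmas

variable {K : ℕ} {v : Fin (K + 1) → ℝ} {I : Finset ℕ} {m : ℕ → ℝ}
  {J : Finset ℕ} {r q : ℕ → ℝ}

theorem tail_nonneg {f : Fin (K + 1) → ℝ} (hf : ∀ i, 0 ≤ f i) (p : ℝ) :
    0 ≤ tail v f p :=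
  Finset.sum_nonneg (fun i _ => by by_cases h : p ≤ v i <;> simp [tail, h, hf i])

theorem tail_le_one {f : Fin (K + 1) → ℝ} (hf : IsDist f) (p : ℝ) :
    tail v f p ≤ 1 := by
  rw [← hf.2]
  exact Finset.sum_le_sum (fun i _ => by by_cases h : p ≤ v i <;> simp [h, hf.1 i])

theorem term_nonneg (hv0 : ∀ i, 0 ≤ v i) {f : Fin (K + 1) → ℝ} (hf : ∀ i, 0 ≤ f i)
    (p : Fin (K + 1)) : 0 ≤ v p * tail v f (v p) :=
  mul_nonneg (hv0 p) (tail_nonneg hf _)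

theorem opt_spec (f : Fin (K + 1) → ℝ) :
    (∀ p, v p * tail v f (v p) ≤ opt v f) ∧ ∃ p, opt v f = v p * tail v f (v p) := by
  obtain ⟨p0, hp0⟩ := Finite.exists_max (fun p : Fin (K + 1) => v p * tail v f (v p))
  have hb : BddAbove (Set.range (fun p : Fin (K + 1) => v p * tail v f (v p))) :=
    Set.Finite.bddAbove (Set.finite_range _)
  refine ⟨fun p => le_ciSup hb p, p0, le_antisymm (ciSup_le hp0) (le_ciSup hb p0)⟩

theorem opt_nonneg (hv0 : ∀ i, 0 ≤ v i) {f : Fin (K + 1) → ℝ} (hf : ∀ i, 0 ≤ f i) :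
    0 ≤ opt v f :=
  le_trans (term_nonneg hv0 hf 0) ((opt_spec f).1 0)

theorem opt_le (hv : StrictMono v) (hv0 : ∀ i, 0 ≤ v i) {f : Fin (K + 1) → ℝ}
    (hf : IsDist f) : opt v f ≤ v (Fin.last K) := by
  obtain ⟨p, hp⟩ := (opt_spec (v := v) f).2
  rw [hp]
  calc v p * tail v f (v p) ≤ v p * 1 :=
        mul_le_mul_of_nonneg_left (tail_le_one hf _) (hv0 p)
    _ = v p := mul_one _
    _ ≤ v (Fin.last K) := hv.monotone (Fin.le_last p)

theorem revenue_eq_sum_cum (φ f : Fin (K + 1) → ℝ) :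
    revenue v φ f = ∑ w, f w * cum v φ w := by
  unfold revenue tail cum
  have lhs : ∀ i : Fin (K+1), φ i * v i * (∑ w, if v i ≤ v w then f w else 0)
      = ∑ w, (if v i ≤ v w then f w * (v i * φ i) else 0) := by
    intro i
    rw [Finset.mul_sum]
    exact Finset.sum_congr rfl (fun w _ => by by_cases h : v i ≤ v w <;> simp [h] <;> ring)
  have rhs : ∀ w : Fin (K+1), f w * (∑ i, if v i ≤ v w then v i * φ i else 0)
      = ∑ i, (if v i ≤ v w then f w * (v i * φ i) else 0) := by
    intro w
    rw [Finset.mul_sum]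
    exact Finset.sum_congr rfl (fun i _ => by by_cases h : v i ≤ v w <;> simp [h])
  calc (∑ i, φ i * v i * ∑ w, if v i ≤ v w then f w else 0)
      = ∑ i, ∑ w, (if v i ≤ v w then f w * (v i * φ i) else 0) :=
        Finset.sum_congr rfl (fun i _ => lhs i)
    _ = ∑ w, ∑ i, (if v i ≤ v w then f w * (v i * φ i) else 0) := Finset.sum_comm
    _ = ∑ w, f w * (∑ i, if v i ≤ v w then v i * φ i else 0) :=
        Finset.sum_congr rfl (fun w _ => (rhs w).symm)

/-- the per-price objective coefficient -/
def cp (v φ : Fin (K + 1) → ℝ) (l : ℝ) (p : Fin (K + 1)) (w : Fin (K + 1)) : ℝ :=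
  l * v p * (if v p ≤ v w then 1 else 0) - cum v φ w

theorem sum_cp (φ f : Fin (K + 1) → ℝ) (l : ℝ) (p : Fin (K + 1)) :
    ∑ w, f w * cp v φ l p w = l * v p * tail v f (v p) - revenue v φ f := by
  unfold cp
  rw [revenue_eq_sum_cum]
  have : ∀ w, f w * (l * v p * (if v p ≤ v w then 1 else 0) - cum v φ w)
      = (if v p ≤ v w then f w else 0) * (l * v p) - f w * cum v φ w := by
    intro w
    by_cases h : v p ≤ v w <;> simp [h] <;> ring
  rw [Finset.sum_congr rfl (fun w _ => this w), Finset.sum_sub_distrib,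
    ← Finset.sum_mul, tail]
  ring

theorem regfun_le (hv : StrictMono v) (hv0 : ∀ i, 0 ≤ v i) {l : ℝ}
    (hl : l ∈ Set.Icc (0:ℝ) 1) (φ : Fin (K + 1) → ℝ) {f : Fin (K + 1) → ℝ} (hf : IsDist f) :
    l * opt v f - revenue v φ f ≤ v (Fin.last K) + ∑ i, |φ i| * v i := by
  have h1 : l * opt v f ≤ v (Fin.last K) := by
    calc l * opt v f ≤ 1 * opt v f :=
          mul_le_mul_of_nonneg_right hl.2 (opt_nonneg hv0 hf.1)
      _ = opt v f := one_mul _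
      _ ≤ v (Fin.last K) := opt_le hv hv0 hf
  have h2 : -(∑ i, |φ i| * v i) ≤ revenue v φ f := by
    rw [← Finset.sum_neg_distrib]
    refine Finset.sum_le_sum (fun i _ => ?_)
    have ht := tail_nonneg (v := v) hf.1 (v i)
    have ht1 := tail_le_one (v := v) hf (v i)
    nlinarith [mul_le_mul_of_nonneg_left ht1 (mul_nonneg (abs_nonneg (φ i)) (hv0 i)),
      mul_le_mul_of_nonneg_right (neg_le_abs (φ i)) (mul_nonneg (hv0 i) ht)]
  linarith

theorem wcReg_bddAbove (hv : StrictMono v) (hv0 : ∀ i, 0 ≤ v i) {l : ℝ}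
    (hl : l ∈ Set.Icc (0:ℝ) 1) (φ : Fin (K + 1) → ℝ) :
    BddAbove ((fun f => l * opt v f - revenue v φ f) '' MQSet v I m J r q) := by
  refine ⟨v (Fin.last K) + ∑ i, |φ i| * v i, ?_⟩
  rintro x ⟨f, hf, rfl⟩
  exact regfun_le hv hv0 hl φ hf.1

theorem le_wcReg (hv : StrictMono v) (hv0 : ∀ i, 0 ≤ v i) {l : ℝ}
    (hl : l ∈ Set.Icc (0:ℝ) 1) (φ : Fin (K + 1) → ℝ) {f : Fin (K + 1) → ℝ}
    (hf : f ∈ MQSet v I m J r q) :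
    l * opt v f - revenue v φ f ≤ wcReg v (MQSet v I m J r q) φ l :=
  le_csSup (wcReg_bddAbove hv hv0 hl φ) ⟨f, hf, rfl⟩

/-- weak duality: a dual feasible pair bounds the worst-case regret -/
theorem wcReg_le_of_dualFeas (hv : StrictMono v) (hv0 : ∀ i, 0 ≤ v i)
    (hMQ : (MQSet v I m J r q).Nonempty) {l θ : ℝ} (hl : l ∈ Set.Icc (0:ℝ) 1)
    {φ : Fin (K + 1) → ℝ} {α β : ℕ → Fin (K + 1) → ℝ}
    (hd : dualFeas v I m J r q φ l θ α β) :
    wcReg v (MQSet v I m J r q) φ l ≤ θ := by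
  refine csSup_le (hMQ.image _) ?_
  rintro x ⟨f, hf, rfl⟩
  obtain ⟨p, hp⟩ := (opt_spec (v := v) f).2
  have key : l * v p * tail v f (v p) - revenue v φ f ≤ θ := by
    rw [← sum_cp]
    have step1 : ∑ w, f w * cp v φ l p w
        ≤ ∑ w, f w * ((∑ i ∈ I, α i p * v w ^ i) + ∑ j ∈ J, β j p * (if r j ≤ v w then 1 else 0)) := by
      refine Finset.sum_le_sum (fun w _ => mul_le_mul_of_nonneg_left ?_ (hf.1.1 w))
      have := hd.2 w p
      unfold cp
      linarith
    have step2 : ∑ w, f w * ((∑ i ∈ I, α i p * v w ^ i) + ∑ j ∈ J, β j p * (if r j ≤ v w then 1 else 0))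
        = ∑ i ∈ I, α i p * m i + ∑ j ∈ J, β j p * q j := by
      have e1 : ∀ w, f w * ((∑ i ∈ I, α i p * v w ^ i) + ∑ j ∈ J, β j p * (if r j ≤ v w then 1 else 0))
          = (∑ i ∈ I, α i p * (f w * v w ^ i)) + ∑ j ∈ J, β j p * (if r j ≤ v w then f w else 0) := by
        intro w
        rw [mul_add, Finset.mul_sum, Finset.mul_sum]
        congr 1
        · exact Finset.sum_congr rfl (fun i _ => by ring)
        · exact Finset.sum_congr rfl (fun j _ => by by_cases h : r j ≤ v w <;> simp [h] <;> ring)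
      rw [Finset.sum_congr rfl (fun w _ => e1 w), Finset.sum_add_distrib]
      congr 1
      · rw [Finset.sum_comm]
        refine Finset.sum_congr rfl (fun i hi => ?_)
        rw [← Finset.mul_sum, hf.2.1 i hi]
      · rw [Finset.sum_comm]
        refine Finset.sum_congr rfl (fun j hj => ?_)
        rw [← Finset.mul_sum]
        congr 1
        exact hf.2.2 j hj
    calc ∑ w, f w * cp v φ l p w ≤ _ := step1
      _ = _ := step2
      _ ≤ θ := hd.1 p
  show l * opt v f - revenue v φ f ≤ θ
  rw [hp]
  linarith [key]

theorem val_le_wcReg (hv : StrictMono v) (hv0 : ∀ i, 0 ≤ v i)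
    (hMQ : (MQSet v I m J r q).Nonempty) {l : ℝ} (hl : l ∈ Set.Icc (0:ℝ) 1)
    (φ : Fin (K + 1) → ℝ) (p : Fin (K + 1)) :
    sSup ((fun f => ∑ w, f w * cp v φ l p w) '' MQSet v I m J r q)
      ≤ wcReg v (MQSet v I m J r q) φ l := by
  refine csSup_le (hMQ.image _) ?_
  rintro x ⟨f, hf, rfl⟩
  show ∑ w, f w * cp v φ l p w ≤ _
  rw [sum_cp]
  have h1 : l * (v p * tail v f (v p)) ≤ l * opt v f :=
    mul_le_mul_of_nonneg_left ((opt_spec (v := v) f).1 p) hl.1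
  have h2 := le_wcReg hv hv0 hl φ hf
  have : l * v p * tail v f (v p) = l * (v p * tail v f (v p)) := by ring
  linarith

/-- `wcReg` is Lipschitz-type continuous in the mechanism -/
theorem wcReg_cont (hv : StrictMono v) (hv0 : ∀ i, 0 ≤ v i)
    (hMQ : (MQSet v I m J r q).Nonempty) {l : ℝ} (hl : l ∈ Set.Icc (0:ℝ) 1) :
    Continuous (fun φ => wcReg v (MQSet v I m J r q) φ l) := by
  set C : ℝ := ∑ i, v i with hC
  have hC0 : 0 ≤ C := Finset.sum_nonneg (fun i _ => hv0 i)
  have key : ∀ φ1 φ2 : Fin (K + 1) → ℝ,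
      wcReg v (MQSet v I m J r q) φ1 l ≤ wcReg v (MQSet v I m J r q) φ2 l + C * dist φ1 φ2 := by
    intro φ1 φ2
    refine csSup_le (hMQ.image _) ?_
    rintro x ⟨f, hf, rfl⟩
    show l * opt v f - revenue v φ1 f ≤ _
    have h1 : revenue v φ2 f - revenue v φ1 f ≤ C * dist φ1 φ2 := by
      unfold revenue
      rw [← Finset.sum_sub_distrib]
      have : ∀ i : Fin (K + 1), φ2 i * v i * tail v f (v i) - φ1 i * v i * tail v f (v i)
          ≤ v i * dist φ1 φ2 := by
        intro i
        have habs : φ2 i - φ1 i ≤ dist φ1 φ2 := by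
          have := dist_le_pi_dist φ2 φ1 i
          rw [Real.dist_eq] at this
          rw [dist_comm φ1 φ2]
          calc φ2 i - φ1 i ≤ |φ2 i - φ1 i| := le_abs_self _
            _ ≤ dist φ2 φ1 := this
        have ht := tail_nonneg (v := v) hf.1.1 (v i)
        have ht1 := tail_le_one (v := v) hf.1 (v i)
        have hd0 : (0:ℝ) ≤ dist φ1 φ2 := dist_nonneg
        nlinarith [hv0 i, mul_le_mul_of_nonneg_right habs (mul_nonneg (hv0 i) ht),
          mul_le_mul_of_nonneg_left ht1 (mul_nonneg hd0 (hv0 i))]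
      calc ∑ i, (φ2 i * v i * tail v f (v i) - φ1 i * v i * tail v f (v i))
          ≤ ∑ i, v i * dist φ1 φ2 := Finset.sum_le_sum (fun i _ => this i)
        _ = C * dist φ1 φ2 := by rw [hC, Finset.sum_mul]
    have h2 := le_wcReg (I := I) (m := m) (J := J) (r := r) (q := q) hv hv0 hl φ2 hf
    linarith
  have hlip : LipschitzWith (Real.toNNReal C) (fun φ => wcReg v (MQSet v I m J r q) φ l) := by
    refine LipschitzWith.of_dist_le_mul (fun φ1 φ2 => ?_)
    rw [Real.dist_eq, Real.coe_toNNReal C hC0]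
    rw [abs_sub_le_iff]
    constructor
    · have := key φ1 φ2; linarith
    · have := key φ2 φ1; rw [dist_comm φ2 φ1] at this; linarith
  exact hlip.continuous

theorem Mold_compact (hv : StrictMono v) (hv0 : ∀ i, 0 ≤ v i)
    (hMQ : (MQSet v I m J r q).Nonempty) {l rold : ℝ} (hl : l ∈ Set.Icc (0:ℝ) 1) :
    IsCompact {φ : Fin (K + 1) → ℝ | IsDist φ ∧ wcReg v (MQSet v I m J r q) φ l ≤ rold} := by
  have hWcont := wcReg_cont (I := I) (m := m) (J := J) (r := r) (q := q) hv hv0 hMQ hl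
  have hclosed : IsClosed {φ : Fin (K + 1) → ℝ | IsDist φ ∧ wcReg v (MQSet v I m J r q) φ l ≤ rold} := by
    have h1 : IsClosed {φ : Fin (K + 1) → ℝ | ∀ i, 0 ≤ φ i} := by
      have : {φ : Fin (K + 1) → ℝ | ∀ i, 0 ≤ φ i} = ⋂ i, {φ | 0 ≤ φ i} := by
        ext φ; simp [Set.mem_iInter]
      rw [this]
      exact isClosed_iInter (fun i => isClosed_le continuous_const (continuous_apply i))
    have h2 : IsClosed {φ : Fin (K + 1) → ℝ | ∑ i, φ i = 1} :=
      isClosed_eq (continuous_finset_sum _ (fun i _ => continuous_apply i)) continuous_const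
    have h3 : IsClosed {φ : Fin (K + 1) → ℝ | wcReg v (MQSet v I m J r q) φ l ≤ rold} :=
      isClosed_le hWcont continuous_const
    have : {φ : Fin (K + 1) → ℝ | IsDist φ ∧ wcReg v (MQSet v I m J r q) φ l ≤ rold}
        = ({φ : Fin (K + 1) → ℝ | ∀ i, 0 ≤ φ i} ∩ {φ | ∑ i, φ i = 1})
          ∩ {φ | wcReg v (MQSet v I m J r q) φ l ≤ rold} := by
      ext φ
      simp only [Set.mem_setOf_eq, Set.mem_inter_iff, IsDist]
    rw [this]
    exact (h1.inter h2).inter h3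
  refine IsCompact.of_isClosed_subset
    (isCompact_Icc (a := fun _ : Fin (K + 1) => (0:ℝ)) (b := fun _ => (1:ℝ))) hclosed ?_
  rintro φ ⟨hφ, -⟩
  constructor
  · intro i; exact hφ.1 i
  · intro i; exact MQSet_le_one hφ i

end Lemmas

/-- the cross regret `min_{Φ ∈ M_old} R_{λ_new}^Φ(𝓕)` equals the (attained)
infimum of `θ` over tuples `(φ, θ, α_new, β_new, α_old, β_old)` satisfying constraints
(a)–(d) of the cross-regret linear program. -/
theorem stmt8 (K : ℕ) (v : Fin (K + 1) → ℝ) (hv : StrictMono v) (hv0 : ∀ i, 0 ≤ v i)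
    (I : Finset ℕ) (m : ℕ → ℝ) (J : Finset ℕ) (r q : ℕ → ℝ)
    (hI0 : 0 ∈ I) (hm0 : m 0 = 1) (hrG : ∀ j ∈ J, ∃ i, r j = v i)
    (hMQ : (MQSet v I m J r q).Nonempty)
    (lnew lold : ℝ) (hlnew : lnew ∈ Set.Icc (0 : ℝ) 1) (hlold : lold ∈ Set.Icc (0 : ℝ) 1)
    (rold : ℝ)
    (hMold : ∃ φ : Fin (K + 1) → ℝ, IsDist φ ∧ wcReg v (MQSet v I m J r q) φ lold ≤ rold) :
    IsLeast {θ : ℝ | ∃ (φ : Fin (K + 1) → ℝ) (αnew βnew αold βold : ℕ → Fin (K + 1) → ℝ),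
        IsDist φ ∧ dualFeas v I m J r q φ lnew θ αnew βnew ∧
        dualFeas v I m J r q φ lold rold αold βold}
      (sInf ((fun φ => wcReg v (MQSet v I m J r q) φ lnew) ''
        {φ | IsDist φ ∧ wcReg v (MQSet v I m J r q) φ lold ≤ rold})) := by
  classical
  have hMne : Set.Nonempty {φ : Fin (K + 1) → ℝ | IsDist φ ∧
      wcReg v (MQSet v I m J r q) φ lold ≤ rold} := hMold
  have hcomp := Mold_compact (rold := rold) hv hv0 hMQ hlold
  have hcont := (wcReg_cont (I := I) (m := m) (J := J) (r := r) (q := q)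
    hv hv0 hMQ hlnew).continuousOn (s := {φ : Fin (K + 1) → ℝ | IsDist φ ∧
      wcReg v (MQSet v I m J r q) φ lold ≤ rold})
  obtain ⟨φs, hφsM, hmin⟩ := hcomp.exists_isMinOn hMne hcont
  have hLeast : IsLeast ((fun φ => wcReg v (MQSet v I m J r q) φ lnew) ''
      {φ | IsDist φ ∧ wcReg v (MQSet v I m J r q) φ lold ≤ rold})
      (wcReg v (MQSet v I m J r q) φs lnew) :=
    ⟨⟨φs, hφsM, rfl⟩, by rintro x ⟨φ, hφ, rfl⟩; exact isMinOn_iff.mp hmin φ hφ⟩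
  rw [hLeast.csInf_eq]
  constructor
  · choose αn βn hn1 hn2 using fun p => strong_dual hI0 hm0 hMQ (cp v φs lnew p)
    choose αo βo ho1 ho2 using fun p => strong_dual hI0 hm0 hMQ (cp v φs lold p)
    refine ⟨φs, fun i p => αn p i, fun j p => βn p j, fun i p => αo p i, fun j p => βo p j,
      hφsM.1, ⟨?_, ?_⟩, ⟨?_, ?_⟩⟩
    · intro p
      exact le_trans (hn1 p) (val_le_wcReg hv hv0 hMQ hlnew φs p)
    · intro w p
      have h5 := hn2 p w
      unfold cp at h5
      simp only []
      linarith
    · intro p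
      exact le_trans (ho1 p)
        (le_trans (val_le_wcReg hv hv0 hMQ hlold φs p) hφsM.2)
    · intro w p
      have h5 := ho2 p w
      unfold cp at h5
      simp only []
      linarith
  · rintro θ ⟨φ, αnew, βnew, αold, βold, hφ, hdn, hdo⟩
    have h1 : wcReg v (MQSet v I m J r q) φ lnew ≤ θ :=
      wcReg_le_of_dualFeas hv hv0 hMQ hlnew hdn
    have h2 : φ ∈ {φ : Fin (K + 1) → ℝ | IsDist φ ∧
        wcReg v (MQSet v I m J r q) φ lold ≤ rold} :=
      ⟨hφ, wcReg_le_of_dualFeas hv hv0 hMQ hlold hdo⟩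
    exact le_trans (isMinOn_iff.mp hmin φ h2) h1
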